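/- arXiv:1503.01727 — 2 statements merged into one kernel-verified Lean document; each statement's English description precedes it below -/
import Mathlib

section
/- If λ_1, …, λ_P are strictly positive reals satisfying 2 max_k λ_k + Σ_j λ_j < 2, then every eigenvalue of Φ = diag((1−λ_k)^2 + λ_k^2) + λ λ^T is strictly less than 1, and hence the iteration ν[n+1] = Φ ν[n] + J λ converges for any J and any initial ν[0]. -/
/-!
In the sup norm on vectors, the induced operator norm of a matrix is its largest absolute row sum.
All entries of `Φ` are nonnegative and the `k`-th row sums to
`(1 - λ_k)² + λ_k² + λ_k Σ_j λ_j = 1 - λ_k (2 - 2 λ_k - Σ_j λ_j) < 1`,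
which is the upper end of the `k`-th Gershgorin interval. Hence `‖Φ‖ < 1`: every point of the
spectrum has absolute value below `1`, and `v ↦ Φ v + J λ` is a contraction of the complete space
`ℝ^P`, whose unique fixed point is `(1 - Φ)⁻¹ (J λ)`.
-/

open Matrix Finset Filter Topology

attribute [local instance] Matrix.linftyOpSeminormedAddCommGroup Matrix.linftyOpNormedAddCommGroup
  Matrix.linftyOpNormedRing Matrix.linftyOpNormedAlgebra

namespace Matrix

section OperatorNorm

variable {m n α : Type*} [Fintype m] [Fintype n]

theorem linfty_opNorm_lt_iff [SeminormedAddCommGroup α] {A : Matrix m n α} {r : ℝ} (hr : 0 < r) :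
    ‖A‖ < r ↔ ∀ i, ∑ j, ‖A i j‖ < r := by
  lift r to NNReal using hr.le
  rw [linfty_opNorm_def, NNReal.coe_lt_coe, Finset.sup_lt_iff (by exact_mod_cast hr)]
  simp only [mem_univ, true_implies, ← NNReal.coe_lt_coe, NNReal.coe_sum, coe_nnnorm]

variable [DecidableEq n]

theorem linfty_opNorm_one_le [SeminormedRing α] [NormOneClass α] :
    ‖(1 : Matrix n n α)‖ ≤ 1 := by
  rw [← diagonal_one, linfty_opNorm_diagonal]
  exact pi_norm_le_iff_of_nonneg zero_le_one |>.mpr fun _ => norm_one.le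

theorem contractingWith_mulVec_add [NormedRing α] {A : Matrix n n α} (hA : ‖A‖ < 1)
    (b : n → α) : ContractingWith ‖A‖₊ (fun v => A *ᵥ v + b) := by
  refine ⟨hA, LipschitzWith.of_dist_le_mul fun v w => ?_⟩
  rw [dist_eq_norm, dist_eq_norm, add_sub_add_right_eq_sub, ← mulVec_sub, coe_nnnorm]
  exact linfty_opNorm_mulVec A (v - w)

end OperatorNorm

section Spectrum

variable {n 𝕜 : Type*} [Fintype n] [DecidableEq n] [NontriviallyNormedField 𝕜] [CompleteSpace 𝕜]

theorem norm_lt_one_of_mem_spectrum {A : Matrix n n 𝕜} (hA : ‖A‖ < 1) {μ : 𝕜}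
    (hμ : μ ∈ spectrum 𝕜 A) : ‖μ‖ < 1 := by
  have hμA : ‖μ‖ ≤ ‖A‖ * ‖(1 : Matrix n n 𝕜)‖ := by
    simpa using @spectrum.subset_closedBall_norm_mul 𝕜 _ _ _ _
      (FiniteDimensional.complete 𝕜 _) A μ hμ
  calc ‖μ‖ ≤ ‖A‖ * ‖(1 : Matrix n n 𝕜)‖ := hμA
    _ ≤ ‖A‖ := mul_le_of_le_one_right (norm_nonneg A) linfty_opNorm_one_le
    _ < 1 := hA

theorem mulVec_add_nonsing_inv_one_sub {A : Matrix n n 𝕜} (hA : ‖A‖ < 1) (b : n → 𝕜) :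
    A *ᵥ ((1 - A)⁻¹ *ᵥ b) + b = (1 - A)⁻¹ *ᵥ b := by
  have hunit : IsUnit (1 - A) := by
    simpa using spectrum.notMem_iff.mp fun h => (norm_lt_one_of_mem_spectrum hA h).ne norm_one
  have hdet : IsUnit (1 - A).det := (isUnit_iff_isUnit_det _).mp hunit
  have hsolve : (1 - A) *ᵥ ((1 - A)⁻¹ *ᵥ b) = b := by
    rw [mulVec_mulVec, mul_nonsing_inv _ hdet, one_mulVec]
  rw [sub_mulVec, one_mulVec] at hsolve
  nth_rewrite 2 [← hsolve]
  abel

theorem tendsto_of_eq_mulVec_add {A : Matrix n n 𝕜} (hA : ‖A‖ < 1) (b : n → 𝕜)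
    {ν : ℕ → n → 𝕜} (hν : ∀ k, ν (k + 1) = A *ᵥ ν k + b) :
    Tendsto ν atTop (𝓝 ((1 - A)⁻¹ *ᵥ b)) := by
  set f : (n → 𝕜) → n → 𝕜 := fun v => A *ᵥ v + b
  have hf := contractingWith_mulVec_add hA b
  have hiter : ν = fun k => f^[k] (ν 0) := by
    funext k
    induction k with
    | zero => rfl
    | succ k ih => rw [Function.iterate_succ_apply', ← ih, hν k]
  rw [hiter, hf.fixedPoint_unique (mulVec_add_nonsing_inv_one_sub hA b)]
  exact hf.tendsto_iterate_fixedPoint (ν 0)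

end Spectrum

section DiagonalPlusRankOne

variable {n : Type*} [DecidableEq n]

theorem diagonal_add_vecMulVec_self_nonneg {d l : n → ℝ} (hd : 0 ≤ d) (hl : 0 ≤ l) (i j : n) :
    0 ≤ (diagonal d + vecMulVec l l) i j := by
  refine add_nonneg ?_ (mul_nonneg (hl i) (hl j))
  rw [diagonal_apply]
  split_ifs
  exacts [hd i, le_rfl]

variable [Fintype n]

theorem sum_diagonal_add_vecMulVec_self_row (d l : n → ℝ) (i : n) :
    ∑ j, (diagonal d + vecMulVec l l) i j = d i + l i * ∑ j, l j := by
  simp [diagonal_apply, vecMulVec_apply, sum_add_distrib, mul_sum]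

theorem norm_diagonal_add_vecMulVec_self_lt_one {l : n → ℝ} (hl : ∀ k, 0 < l k)
    (hstab : ∀ k, 2 * l k + ∑ j, l j < 2) :
    ‖diagonal (fun k => (1 - l k) ^ 2 + l k ^ 2) + vecMulVec l l‖ < 1 := by
  have hd : 0 ≤ fun k => (1 - l k) ^ 2 + l k ^ 2 := fun k => by positivity
  have hnonneg := diagonal_add_vecMulVec_self_nonneg hd fun k => (hl k).le
  rw [linfty_opNorm_lt_iff one_pos]
  intro i
  simp only [Real.norm_of_nonneg (hnonneg i _), sum_diagonal_add_vecMulVec_self_row]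
  -- the row sum equals `1 - l i * (2 - 2 * l i - ∑ j, l j)`
  nlinarith [hl i, hstab i]

end DiagonalPlusRankOne

end Matrix

/-- If `λ_k > 0` and `2 max_k λ_k + Σ_j λ_j < 2`, then every eigenvalue of
`Φ = diag((1−λ_k)² + λ_k²) + λ λᵀ` is strictly less than `1`, and the iteration
`ν[n+1] = Φ ν[n] + J λ` converges to the unique fixed point `(I − Φ)⁻¹ (J λ)`
for any `J` and any initial condition `ν[0]`. -/
theorem stmt_11 {P : ℕ} (l : Fin P → ℝ) (hl : ∀ k, 0 < l k)
    (hstab : ∀ k, 2 * l k + ∑ j, l j < 2) :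
    (∀ μ ∈ spectrum ℝ
        (Matrix.diagonal (fun k => (1 - l k) ^ 2 + (l k) ^ 2) + Matrix.vecMulVec l l),
      μ < 1) ∧
    (∀ (J : ℝ) (ν : ℕ → Fin P → ℝ),
      (∀ n, ν (n + 1)
          = (Matrix.diagonal (fun k => (1 - l k) ^ 2 + (l k) ^ 2)
              + Matrix.vecMulVec l l).mulVec (ν n) + J • l) →
      Tendsto ν atTop
        (nhds ((1 - (Matrix.diagonal (fun k => (1 - l k) ^ 2 + (l k) ^ 2)
            + Matrix.vecMulVec l l))⁻¹.mulVec (J • l)))) := by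
  have hΦ := norm_diagonal_add_vecMulVec_self_lt_one hl hstab
  refine ⟨fun μ hμ => ?_, fun J ν hν => tendsto_of_eq_mulVec_add hΦ (J • l) hν⟩
  exact (le_abs_self μ).trans_lt (norm_lt_one_of_mem_spectrum hΦ hμ)
end

section
/- If the steady state of the recursion ν_i[n+1] = ((1−λ_i)^2 + λ_i^2) ν_i[n] + λ_i (λ^T ν[n] + J_min) exists with all λ_i in (0,1) and S := (1/2) Σ_i λ_i/(1−λ_i) < 1, then the steady-state excess value J_ex = λ^T ν[∞] satisfies J_ex = J_min · S / (1 − S). -/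
open Finset

/-- The fixed-point equation `v = ((1 - l)² + l²) v + l c` reduces to `l (2 (1 - l) v - c) = 0`. -/
theorem eq_div_of_eq_sq_add_sq_mul_add {l v c : ℝ} (hl₀ : l ≠ 0) (hl₁ : 1 - l ≠ 0)
    (h : v = ((1 - l) ^ 2 + l ^ 2) * v + l * c) : v = c / (2 * (1 - l)) := by
  have hfactor : l * (2 * (1 - l) * v - c) = 0 := by linear_combination h
  rw [eq_div_iff (mul_ne_zero two_ne_zero hl₁)]
  linear_combination (mul_eq_zero.mp hfactor).resolve_left hl₀

theorem eq_mul_div_one_sub_of_eq_add_mul {J a S : ℝ} (hS : S ≠ 1) (h : J = (J + a) * S) :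
    J = a * S / (1 - S) := by
  rw [eq_div_iff (sub_ne_zero.mpr hS.symm)]
  linear_combination h

theorem sum_mul_eq_of_fixedPoint {ι : Type*} [Fintype ι] {l ν : ι → ℝ} {c : ℝ}
    (hl : ∀ i, l i ≠ 0 ∧ 1 - l i ≠ 0)
    (hfix : ∀ i, ν i = ((1 - l i) ^ 2 + l i ^ 2) * ν i + l i * c) :
    ∑ i, l i * ν i = c * ((1 / 2) * ∑ i, l i / (1 - l i)) := by
  rw [mul_sum, mul_sum]
  refine sum_congr rfl fun i _ => ?_
  rw [eq_div_of_eq_sq_add_sq_mul_add (hl i).1 (hl i).2 (hfix i)]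
  field_simp [(hl i).2]

theorem stmt_14_general {P : ℕ} (l : Fin P → ℝ) (ν : Fin P → ℝ) (Jmin : ℝ)
    (hl : ∀ i, 0 < l i ∧ l i < 1)
    (hfix : ∀ i, ν i = ((1 - l i) ^ 2 + (l i) ^ 2) * ν i
        + l i * ((∑ j, l j * ν j) + Jmin))
    (hS : (1 / 2) * ∑ i, l i / (1 - l i) < 1) :
    ∑ i, l i * ν i
      = Jmin * ((1 / 2) * ∑ i, l i / (1 - l i)) / (1 - (1 / 2) * ∑ i, l i / (1 - l i)) :=
  eq_mul_div_one_sub_of_eq_add_mul hS.ne <|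
    sum_mul_eq_of_fixedPoint (fun i => ⟨(hl i).1.ne', sub_ne_zero.mpr (hl i).2.ne'⟩) hfix

/-- Steady-state excess: if `ν[∞]` is a fixed point of
`ν_i = ((1−λ_i)² + λ_i²) ν_i + λ_i (J_ex + J_min)` with `J_ex = Σ_i λ_i ν_i`,
all `λ_i ∈ (0,1)`, `J_min > 0` and `S = (1/2) Σ_i λ_i/(1−λ_i) < 1`, then
`J_ex = J_min · S / (1 − S)`. -/
theorem stmt_14 {P : ℕ} (l : Fin P → ℝ) (ν : Fin P → ℝ) (Jmin : ℝ)
    (hl : ∀ i, 0 < l i ∧ l i < 1) (hJ : 0 < Jmin)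
    (hfix : ∀ i, ν i = ((1 - l i) ^ 2 + (l i) ^ 2) * ν i
        + l i * ((∑ j, l j * ν j) + Jmin))
    (hS : (1 / 2) * ∑ i, l i / (1 - l i) < 1) :
    ∑ i, l i * ν i
      = Jmin * ((1 / 2) * ∑ i, l i / (1 - l i)) / (1 - (1 / 2) * ∑ i, l i / (1 - l i)) :=
  stmt_14_general l ν Jmin hl hfix hS
end
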